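/- arXiv:alg-geom/9612010 — 2 statements merged into one kernel-verified Lean document; each statement's English description precedes it below -/
import Mathlib

section
/- If c is an automorphism of a finite-dimensional vector space with characteristic polynomial φ(λ) = ∏_{m>0} (λ^m - 1)^{χ_m}, then for every k ≥ 1, the trace of c^k equals ∑_{m | k} m·χ_m. -/
/-!
Over an algebraically closed field, `tr(c^k)` is the sum of the `k`-th powers of the roots of the
characteristic polynomial, counted with multiplicity, because on the generalized eigenspace of `μ`
the map `c^k` differs from `μ^k` by a nilpotent. These power sums are additive over products of
nonzero polynomials, so after clearing the factors with `χ m < 0` the frame shape gives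
`tr(c^k) = ∑ χ m · (power sum of the roots of λ^m - 1)`. The roots of `λ^m - 1` are the powers of
a primitive `m`-th root of unity `ζ`, and `∑_{j<m} (ζ^k)^j` is `m` if `m ∣ k` and `0` otherwise.
-/

open Polynomial Module

namespace Polynomial

variable {R : Type*} [CommRing R] [IsDomain R]

noncomputable def powSumRoots (k : ℕ) (p : R[X]) : R :=
  (p.roots.map (· ^ k)).sum

theorem powSumRoots_mul {p q : R[X]} (hpq : p * q ≠ 0) (k : ℕ) :
    (p * q).powSumRoots k = p.powSumRoots k + q.powSumRoots k := by
  simp only [powSumRoots, roots_mul hpq, Multiset.map_add, Multiset.sum_add]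

theorem powSumRoots_pow (p : R[X]) (n k : ℕ) : (p ^ n).powSumRoots k = n * p.powSumRoots k := by
  simp only [powSumRoots, roots_pow, Multiset.map_nsmul, Multiset.sum_nsmul, nsmul_eq_mul]

theorem powSumRoots_prod {ι : Type*} (s : Finset ι) {f : ι → R[X]} (hf : ∀ i ∈ s, f i ≠ 0)
    (k : ℕ) : (∏ i ∈ s, f i).powSumRoots k = ∑ i ∈ s, (f i).powSumRoots k := by
  simp only [powSumRoots, roots_prod f s (Finset.prod_ne_zero_iff.mpr hf), Multiset.map_bind,
    Multiset.sum_bind, Finset.sum_eq_multiset_sum]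

theorem powSumRoots_X_pow_sub_one {ζ : R} {m : ℕ} (hζ : IsPrimitiveRoot ζ m) (k : ℕ) :
    ((X : R[X]) ^ m - 1).powSumRoots k = if m ∣ k then (m : R) else 0 := by
  have hroots : ((X : R[X]) ^ m - 1).roots = (Multiset.range m).map (ζ ^ ·) := by
    simpa [nthRoots] using hζ.nthRoots_eq (one_pow m)
  have hsum : ((X : R[X]) ^ m - 1).powSumRoots k = ∑ j ∈ Finset.range m, (ζ ^ k) ^ j := by
    simp only [powSumRoots, hroots, Multiset.map_map, Function.comp_def, ← pow_mul, mul_comm _ k]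
    rfl
  rw [hsum]
  split_ifs with hmk
  · simp [(hζ.pow_eq_one_iff_dvd k).mpr hmk]
  · have hne : ζ ^ k - 1 ≠ 0 := sub_ne_zero.mpr fun h => hmk ((hζ.pow_eq_one_iff_dvd k).mp h)
    refine (mul_eq_zero_iff_right hne).mp ?_
    rw [geom_sum_mul, ← pow_mul, mul_comm, pow_mul, hζ.pow_eq_one, one_pow, sub_self]

theorem mul_prod_pow_toNat_neg_eq_of_algebraMap_eq_prod_zpow {K ι : Type*} [Field K]
    {s : Finset ι} {g : ι → K[X]} (hg : ∀ i ∈ s, g i ≠ 0) {χ : ι → ℤ} {p : K[X]}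
    (h : algebraMap K[X] (RatFunc K) p = ∏ i ∈ s, algebraMap K[X] (RatFunc K) (g i) ^ χ i) :
    p * ∏ i ∈ s, g i ^ (-χ i).toNat = ∏ i ∈ s, g i ^ (χ i).toNat := by
  apply RatFunc.algebraMap_injective K
  simp only [map_mul, map_prod, map_pow, h, ← Finset.prod_mul_distrib]
  refine Finset.prod_congr rfl fun i hi => ?_
  have hgi : algebraMap K[X] (RatFunc K) (g i) ≠ 0 :=
    (map_ne_zero_iff _ (RatFunc.algebraMap_injective K)).mpr (hg i hi)
  rw [← zpow_natCast, ← zpow_natCast, ← zpow_add₀ hgi]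
  congr 1
  omega

end Polynomial

theorem Commute.isNilpotent_pow_sub_pow {A : Type*} [Ring A] {a b : A} (h : Commute a b)
    (hab : IsNilpotent (a - b)) (n : ℕ) : IsNilpotent (a ^ n - b ^ n) := by
  rw [← h.geom_sum₂_mul n]
  refine Commute.isNilpotent_mul_left (Commute.sum_left _ _ _ fun i _ => ?_) hab
  exact (((Commute.refl a).pow_left i).mul_left (h.symm.pow_left _)).sub_right
    ((h.pow_left i).mul_left ((Commute.refl b).pow_left _))

theorem LinearMap.trace_eq_mul_finrank_of_isNilpotent_sub_algebraMap {R M : Type*} [CommRing R]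
    [IsReduced R] [AddCommGroup M] [Module R M] [Module.Free R M] [Module.Finite R M]
    {g : Module.End R M} (μ : R) (hg : IsNilpotent (g - algebraMap R _ μ)) :
    trace R M g = μ * finrank R M := by
  simpa [Module.End.one_eq_id] using
    trace_comp_eq_mul_of_commute_of_isNilpotent μ (Commute.one_left g) hg

namespace Module.End

variable {K V : Type*} [Field K] [AddCommGroup V] [Module K V] [FiniteDimensional K V]

theorem trace_restrict_maxGenEigenspace_pow (f : End K V) (μ : K) (k : ℕ)
    (h : Set.MapsTo (f ^ k) (f.maxGenEigenspace μ) (f.maxGenEigenspace μ)) :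
    LinearMap.trace K _ ((f ^ k).restrict h) = f.charpoly.rootMultiplicity μ * μ ^ k := by
  have hf := f.mapsTo_maxGenEigenspace_of_comm rfl μ
  have hnil : IsNilpotent (f.restrict hf - algebraMap K _ μ) := by
    convert f.isNilpotent_restrict_maxGenEigenspace_sub_algebraMap μ
    ext
    rfl
  have hnil_pow : IsNilpotent (f.restrict hf ^ k - algebraMap K _ (μ ^ k)) := by
    rw [map_pow]
    exact (Algebra.commute_algebraMap_right μ _).isNilpotent_pow_sub_pow hnil k
  rw [← pow_restrict k hf,
    LinearMap.trace_eq_mul_finrank_of_isNilpotent_sub_algebraMap (μ ^ k) hnil_pow,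
    LinearMap.finrank_maxGenEigenspace_eq, mul_comm]

theorem trace_pow_eq_powSumRoots_charpoly [IsAlgClosed K] (f : End K V) (k : ℕ) :
    LinearMap.trace K V (f ^ k) = f.charpoly.powSumRoots k := by
  classical
  have hds := DirectSum.isInternal_submodule_of_iSupIndep_of_iSup_eq_top
    f.independent_maxGenEigenspace f.iSup_maxGenEigenspace_eq_top
  have hfin : {μ | f.maxGenEigenspace μ ≠ ⊥}.Finite :=
    WellFoundedGT.finite_ne_bot_of_iSupIndep f.independent_maxGenEigenspace
  have hmaps (μ : K) : Set.MapsTo (f ^ k) (f.maxGenEigenspace μ) (f.maxGenEigenspace μ) :=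
    f.mapsTo_maxGenEigenspace_of_comm ((Commute.refl f).pow_right k) μ
  have hsupp : hfin.toFinset = f.charpoly.roots.toFinset := by
    ext μ
    rw [Set.Finite.mem_toFinset, Set.mem_ofPred_eq, Multiset.mem_toFinset, ← Multiset.count_pos,
      count_roots, ← LinearMap.finrank_maxGenEigenspace_eq, Module.finrank_pos_iff,
      Submodule.nontrivial_iff_ne_bot]
  rw [LinearMap.trace_eq_sum_trace_restrict' hds hfin hmaps, hsupp, powSumRoots,
    Finset.sum_multiset_map_count]
  refine Finset.sum_congr rfl fun μ _ => ?_
  rw [trace_restrict_maxGenEigenspace_pow, count_roots, nsmul_eq_mul]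

end Module.End

theorem trace_pow_of_frameShape_charpoly_general
    (V : Type*) [AddCommGroup V] [Module ℂ V] [Module.Finite ℂ V] [Module.Free ℂ V]
    (c : Module.End ℂ V)
    (s : Finset ℕ) (hs : ∀ m ∈ s, 0 < m) (χ : ℕ → ℤ)
    (hχ : algebraMap (Polynomial ℂ) (RatFunc ℂ) (LinearMap.charpoly c)
      = ∏ m ∈ s, (RatFunc.X ^ m - 1) ^ χ m)
    (k : ℕ) :
    LinearMap.trace ℂ V (c ^ k) = ∑ m ∈ s.filter (fun m => m ∣ k), (m : ℂ) * (χ m : ℂ) := by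
  have hne : ∀ m ∈ s, (X ^ m - 1 : ℂ[X]) ≠ 0 := fun m hm => by
    simpa using X_pow_sub_C_ne_zero (hs m hm) (1 : ℂ)
  have hne_pow (n : ℕ → ℕ) : ∀ m ∈ s, ((X : ℂ[X]) ^ m - 1) ^ n m ≠ 0 :=
    fun m hm => pow_ne_zero _ (hne m hm)
  have hpoly := mul_prod_pow_toNat_neg_eq_of_algebraMap_eq_prod_zpow hne
    (by simpa [RatFunc.algebraMap_X] using hχ)
  have hsum := congrArg (powSumRoots k) hpoly
  rw [powSumRoots_mul (mul_ne_zero c.charpoly_monic.ne_zero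
      (Finset.prod_ne_zero_iff.mpr (hne_pow _))), powSumRoots_prod _ (hne_pow _),
    powSumRoots_prod _ (hne_pow _)] at hsum
  rw [Module.End.trace_pow_eq_powSumRoots_charpoly, eq_sub_of_add_eq hsum,
    ← Finset.sum_sub_distrib, Finset.sum_filter]
  refine Finset.sum_congr rfl fun m hm => ?_
  have hχm : ((χ m).toNat : ℂ) - (-χ m).toNat = χ m := by
    exact_mod_cast Int.toNat_sub_toNat_neg (χ m)
  rw [powSumRoots_pow, powSumRoots_pow, ← sub_mul, hχm,
    powSumRoots_X_pow_sub_one (Complex.isPrimitiveRoot_exp m (hs m hm).ne'), mul_ite, mul_zero,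
    mul_comm]

/-- If `c` is an automorphism of a finite-dimensional complex vector space whose
characteristic polynomial is `∏_{m>0} (λ^m - 1)^{χ m}`, then for every `k ≥ 1`,
`tr(c^k) = ∑_{m ∣ k} m·χ m`. -/
theorem trace_pow_of_frameShape_charpoly
    (V : Type*) [AddCommGroup V] [Module ℂ V] [Module.Finite ℂ V] [Module.Free ℂ V]
    (c : Module.End ℂ V) (hc : IsUnit c)
    (s : Finset ℕ) (hs : ∀ m ∈ s, 0 < m) (χ : ℕ → ℤ)
    (hχ : algebraMap (Polynomial ℂ) (RatFunc ℂ) (LinearMap.charpoly c)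
      = ∏ m ∈ s, (RatFunc.X ^ m - 1) ^ χ m)
    (k : ℕ) (hk : 1 ≤ k) :
    LinearMap.trace ℂ V (c ^ k) = ∑ m ∈ s.filter (fun m => m ∣ k), (m : ℂ) * (χ m : ℂ) :=
  trace_pow_of_frameShape_charpoly_general V c s hs χ hχ k
end

section
/- For the polynomial φ(λ) = (λ^2-1)(λ^3-1)(λ^7-1)(λ^{42}-1) / ((λ-1)(λ^6-1)(λ^{14}-1)(λ^{21}-1)) (the characteristic polynomial of the monodromy of the singularity E₁₂), the Saito dual φ* with respect to h = 42 equals φ itself; in particular E₁₂ is Saito self-dual. -/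
open RatFunc

/-- The Saito dual of a Frame shape of order `h`: `χ*_k = -χ_{h/k}`. -/
def saitoDual (h : ℕ) (χ : ℕ → ℤ) : ℕ → ℤ := fun k => -χ (h / k)

/-- The Frame shape `2·3·7·42 / 1·6·14·21` of the singularity `E₁₂`. -/
def chiE12 : ℕ → ℤ := fun m =>
  if m ∈ ([2, 3, 7, 42] : List ℕ) then 1
  else if m ∈ ([1, 6, 14, 21] : List ℕ) then -1 else 0

/-- The characteristic polynomial of the monodromy of `E₁₂` is Saito self-dual with
respect to `h = 42`: the dual exponents coincide with the original ones, and the dual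
rational function `φ*` equals `φ`. -/
theorem E12_saito_self_dual :
    (∀ k ∈ Nat.divisors 42, saitoDual 42 chiE12 k = chiE12 k) ∧
    (∏ m ∈ Nat.divisors 42, ((RatFunc.X : RatFunc ℚ) ^ m - 1) ^ saitoDual 42 chiE12 m
      = ∏ m ∈ Nat.divisors 42, ((RatFunc.X : RatFunc ℚ) ^ m - 1) ^ chiE12 m) := by
  -- `k ↦ 42 / k` pairs the divisors as 1 ↔ 42, 2 ↔ 21, 3 ↔ 14, 6 ↔ 7, and each pair
  -- carries opposite exponents, so negating after the swap gives back `chiE12`.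
  have exponents_self_dual : ∀ k ∈ Nat.divisors 42, saitoDual 42 chiE12 k = chiE12 k := by
    decide
  exact ⟨exponents_self_dual,
    Finset.prod_congr rfl fun m hm => by rw [exponents_self_dual m hm]⟩
end
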